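/- Let n be even and let C ⊆ F4^n be an F4-linear skew-cyclic code of dimension k and minimum distance d. Then there exists a permutation π of {1, …, 2n} such that the permuted code C' = {(v_{π(1)}, …, v_{π(2n)}) : v ∈ S(C)} is an additive 2-quasi-cyclic code of length 2n with 2^{2k} codewords and minimum distance 2d: C' is an additive subgroup of F4^{2n} invariant under the cyclic coordinate shift by two positions. -/

import Mathlib

abbrev F4 : Type := GaloisField 2 2
noncomputable instance : Fintype F4 := Fintype.ofFinite _
noncomputable instance : DecidableEq F4 := Classical.decEq _

/-- The map `S : F4^n → F4^{2n}`, sending `(v_0,…,v_{n-1})` to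
`(v_0, v_0², v_1, v_1², …, v_{n-1}, v_{n-1}²)` (conjugation on `F4` is squaring). -/
noncomputable def Smap (n : ℕ) (v : Fin n → F4) : Fin (2 * n) → F4 :=
  fun i =>
    if i.val % 2 = 0 then v ⟨i.val / 2, by have h := i.isLt; omega⟩
    else (v ⟨i.val / 2, by have h := i.isLt; omega⟩) ^ 2

/-- The code obtained from `C` by permuting coordinates by `π`:
`v' = (v_{π(1)}, …, v_{π(m)})` for `v ∈ C`. -/
def permCode {m : ℕ} (π : Equiv.Perm (Fin m)) (C : Set (Fin m → F4)) :
    Set (Fin m → F4) :=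
  (fun v => fun i => v (π i)) '' C

/-- The minimum Hamming weight of the nonzero elements of a code, which is the
minimum distance of an additive code. -/
noncomputable def minWt {m : ℕ} (C : Set (Fin m → F4)) : ℕ :=
  sInf {r : ℕ | ∃ v ∈ C, v ≠ 0 ∧ r = hammingNorm v}


/-! Coordinate `i` of `S(v)` is `v_{⌊i/2⌋}` conjugated `i` times, and conjugation is an
involution. Under `S`, the skew shift of `v` becomes the shift by two positions followed by
conjugation of every coordinate. Swapping the two coordinates of each odd-indexed pair changes
the number of conjugations at position `i` to `i + ⌊i/2⌋`; as `n` is even, shifting by two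
changes it by one, which absorbs the conjugation. The twisted map is additive and injective and
doubles Hamming weights, so the image has `|C| = 4^k` words and minimum distance `2d`. -/

open Finset

lemma Fin.val_sub_add_val {m : ℕ} (a b : Fin m) :
    (a - b).val + b.val = a.val ∨ (a - b).val + b.val = m + a.val := by
  rcases le_or_gt b a with h | h
  · left; rw [Fin.coe_sub_iff_le.2 h]; exact Nat.sub_add_cancel h
  · right; rw [Fin.coe_sub_iff_lt.2 h]; omega

lemma Fin.val_sub_one_add_one {n : ℕ} [NeZero n] (j : Fin n) :
    (j - 1).val + 1 = j.val ∨ (j - 1).val + 1 = n + j.val := by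
  rcases Nat.lt_or_ge n 2 with hn | hn
  · have : n = 1 := by have := NeZero.ne n; omega
    subst this; right; simp [Subsingleton.elim j 0]
  · simpa [Nat.mod_eq_of_lt (by omega : 1 < n)] using Fin.val_sub_add_val j 1

lemma Fin.val_sub_two_add_two {n : ℕ} [NeZero n] (i : Fin (2 * n)) :
    (i - 2).val + 2 = i.val ∨ (i - 2).val + 2 = 2 * n + i.val := by
  rcases Nat.lt_or_ge n 2 with hn | hn
  · have : n = 1 := by have := NeZero.ne n; omega
    subst this; right; fin_cases i <;> rfl
  · simpa [Nat.mod_eq_of_lt (by omega : 2 < 2 * n)] using Fin.val_sub_add_val i 2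

lemma Fin.val_sub_one_mod_two {n : ℕ} [NeZero n] (hn : Even n) (j : Fin n) :
    (j - 1).val % 2 = (j.val + 1) % 2 := by
  obtain ⟨m, rfl⟩ := hn
  have := Fin.val_sub_one_add_one j
  omega

lemma Nat.sInf_image_mul_left (c : ℕ) (s : Set ℕ) : sInf ((c * ·) '' s) = c * sInf s := by
  rcases s.eq_empty_or_nonempty with rfl | hs
  · simp
  · exact (mul_right_mono.map_csInf hs).symm

lemma F4_card : Fintype.card F4 = 4 := by
  simpa [Nat.card_eq_fintype_card] using GaloisField.card 2 2 two_ne_zero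

lemma F4_pow_two_pow_congr (x : F4) {k l : ℕ} (h : k % 2 = l % 2) : x ^ 2 ^ k = x ^ 2 ^ l := by
  have key (m : ℕ) : x ^ 2 ^ m = x ^ 2 ^ (m % 2) := by
    conv_lhs => rw [← Nat.mod_add_div m 2, pow_add, pow_mul, pow_mul]
    simpa [F4_card] using FiniteField.pow_card_pow (m / 2) (x ^ 2 ^ (m % 2))
  rw [key k, key l, h]

lemma F4_natCard_eq_two_pow (V : Type*) [AddCommGroup V] [Module F4 V] [Module.Finite F4 V] :
    Nat.card V = 2 ^ (2 * Module.finrank F4 V) := by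
  rw [Module.natCard_eq_pow_finrank (K := F4), Nat.card_eq_fintype_card, F4_card, pow_mul]; norm_num

def pairIndex {n : ℕ} (i : Fin (2 * n)) : Fin n := ⟨i.val / 2, by omega⟩

lemma Smap_apply (n : ℕ) (v : Fin n → F4) (i : Fin (2 * n)) :
    Smap n v i = v (pairIndex i) ^ 2 ^ i.val := by
  unfold Smap
  split_ifs with h
  · rw [F4_pow_two_pow_congr _ (by omega : i.val % 2 = 0 % 2)]; simp [pairIndex]
  · rw [F4_pow_two_pow_congr _ (by omega : i.val % 2 = 1 % 2)]; simp [pairIndex]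

lemma card_filter_pairIndex (n : ℕ) (P : Fin n → Prop) [DecidablePred P] :
    #{i : Fin (2 * n) | P (pairIndex i)} = 2 * #{j | P j} := by
  let e : Fin n × Fin 2 ≃ Fin (2 * n) := finProdFinEquiv.trans (finCongr (Nat.mul_comm n 2))
  have he (p : Fin n × Fin 2) : pairIndex (e p) = p.1 := by
    ext
    simp only [pairIndex, e, Equiv.trans_apply, finCongr_apply, Fin.val_cast,
      finProdFinEquiv_apply_val]
    omega
  calc #{i : Fin (2 * n) | P (pairIndex i)} = #((univ.filter P) ×ˢ (univ : Finset (Fin 2))) :=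
        Finset.card_equiv e.symm (by simp [← he])
    _ = 2 * #{j | P j} := by rw [card_product, card_univ, Fintype.card_fin, Nat.mul_comm]

/-- Inside the pair with index `j`, swap the two coordinates iff `j` is odd. -/
def twist (n : ℕ) : Equiv.Perm (Fin (2 * n)) :=
  Function.Involutive.toPerm (fun i => ⟨2 * (i.val / 2) + (i.val + i.val / 2) % 2, by omega⟩)
    (fun i => by ext; simp only; omega)

lemma twist_val (n : ℕ) (i : Fin (2 * n)) :
    (twist n i).val = 2 * (i.val / 2) + (i.val + i.val / 2) % 2 := rfl

/-- The coordinates of `S(v)` in the order given by `twist`: the pair of index `j` is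
`(v_j, v̄_j)` for even `j` and `(v̄_j, v_j)` for odd `j`. -/
noncomputable def twistedSmap (n : ℕ) : (Fin n → F4) →+ (Fin (2 * n) → F4) where
  toFun v i := Smap n v (twist n i)
  map_zero' := by ext i; simp [Smap_apply]
  map_add' u v := by ext i; simp [Smap_apply, add_pow_char_pow]

lemma twistedSmap_apply (n : ℕ) (v : Fin n → F4) (i : Fin (2 * n)) :
    twistedSmap n v i = v (pairIndex i) ^ 2 ^ (i.val + i.val / 2) := by
  have hpair : pairIndex (twist n i) = pairIndex i := by
    ext; simp only [pairIndex, twist_val]; omega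
  change Smap n v (twist n i) = _
  rw [Smap_apply, hpair]
  exact F4_pow_two_pow_congr _ (by rw [twist_val]; omega)

lemma permCode_twist_image_Smap (n : ℕ) (C : Set (Fin n → F4)) :
    permCode (twist n) (Smap n '' C) = twistedSmap n '' C :=
  Set.image_image _ _ _

lemma hammingNorm_twistedSmap (n : ℕ) (v : Fin n → F4) :
    hammingNorm (twistedSmap n v) = 2 * hammingNorm v := by
  simp only [hammingNorm, twistedSmap_apply, ne_eq, pow_eq_zero_iff', not_and_or]
  simpa using card_filter_pairIndex n (fun j => v j ≠ 0)

lemma twistedSmap_injective (n : ℕ) : Function.Injective (twistedSmap n) :=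
  (injective_iff_map_eq_zero _).2 fun v hv => by
    simpa [hv] using hammingNorm_twistedSmap n v

lemma pairIndex_sub_two {n : ℕ} [NeZero n] (i : Fin (2 * n)) :
    pairIndex (i - 2) = pairIndex i - 1 := by
  have h1 := Fin.val_sub_two_add_two i
  have h2 := Fin.val_sub_one_add_one (pairIndex i)
  have := (i - 2).isLt
  have := (pairIndex i - 1).isLt
  ext; simp only [pairIndex] at *; omega

lemma twistedSmap_skewShift {n : ℕ} [NeZero n] (hn : Even n) (v : Fin n → F4) :
    twistedSmap n (fun j => v (j - 1) ^ 2) = fun i => twistedSmap n v (i - 2) := by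
  ext i
  rw [twistedSmap_apply, twistedSmap_apply, ← pow_mul, ← pow_succ', pairIndex_sub_two]
  apply F4_pow_two_pow_congr
  have h1 := Fin.val_sub_two_add_two i
  have h2 := Fin.val_sub_one_mod_two hn (pairIndex i)
  have h3 : (i - 2).val / 2 = (pairIndex i - 1).val := congrArg Fin.val (pairIndex_sub_two i)
  simp only [pairIndex] at h2 h3
  have := i.isLt
  omega

lemma minWt_image {m m' : ℕ} (f : (Fin m → F4) → (Fin m' → F4)) {c : ℕ} (hc : c ≠ 0)
    (hf : ∀ v, hammingNorm (f v) = c * hammingNorm v) (C : Set (Fin m → F4)) :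
    minWt (f '' C) = c * minWt C := by
  have hf0 (v) : f v = 0 ↔ v = 0 := by
    rw [← hammingNorm_eq_zero, hf, mul_eq_zero, hammingNorm_eq_zero, or_iff_right hc]
  have hset : {r | ∃ w ∈ f '' C, w ≠ 0 ∧ r = hammingNorm w} =
      (c * ·) '' {r | ∃ v ∈ C, v ≠ 0 ∧ r = hammingNorm v} := by
    ext r
    constructor
    · rintro ⟨_, ⟨v, hv, rfl⟩, hw, rfl⟩
      exact ⟨_, ⟨v, hv, mt (hf0 v).2 hw, rfl⟩, (hf v).symm⟩
    · rintro ⟨_, ⟨v, hv, hv0, rfl⟩, rfl⟩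
      exact ⟨f v, ⟨v, hv, rfl⟩, mt (hf0 v).1 hv0, (hf v).symm⟩
  rw [minWt, hset, Nat.sInf_image_mul_left, minWt]

/-- Let `n` be even and `C ⊆ F4^n` an `F4`-linear skew-cyclic code of
dimension `k` and minimum distance `d`.  Then some coordinate permutation of `S(C)`
is an additive 2-quasi-cyclic code of length `2n` with `2^{2k}` codewords and minimum
distance `2d`. -/
theorem Smap_skewCyclic_even_equiv_additive_quasiCyclic (n k d : ℕ) [NeZero n] (heven : Even n)
    (C : Submodule F4 (Fin n → F4))
    (hskew : ∀ v ∈ C, (fun i : Fin n => (v (i - 1)) ^ 2) ∈ C)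
    (hk : Module.finrank F4 C = k)
    (hd : minWt (C : Set (Fin n → F4)) = d) :
    ∃ π : Equiv.Perm (Fin (2 * n)),
      (0 : Fin (2 * n) → F4) ∈ permCode π (Smap n '' (C : Set (Fin n → F4))) ∧
      (∀ u ∈ permCode π (Smap n '' (C : Set (Fin n → F4))),
        ∀ w ∈ permCode π (Smap n '' (C : Set (Fin n → F4))),
          u + w ∈ permCode π (Smap n '' (C : Set (Fin n → F4)))) ∧
      (∀ u ∈ permCode π (Smap n '' (C : Set (Fin n → F4))),
          -u ∈ permCode π (Smap n '' (C : Set (Fin n → F4)))) ∧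
      (∀ w ∈ permCode π (Smap n '' (C : Set (Fin n → F4))),
          (fun i : Fin (2 * n) => w (i - 2)) ∈
            permCode π (Smap n '' (C : Set (Fin n → F4)))) ∧
      (permCode π (Smap n '' (C : Set (Fin n → F4)))).ncard = 2 ^ (2 * k) ∧
      minWt (permCode π (Smap n '' (C : Set (Fin n → F4)))) = 2 * d := by
  refine ⟨twist n, ?_⟩
  rw [permCode_twist_image_Smap]
  refine ⟨⟨0, C.zero_mem, map_zero _⟩, ?_, ?_, ?_, ?_, ?_⟩
  · rintro _ ⟨u, hu, rfl⟩ _ ⟨w, hw, rfl⟩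
    exact ⟨u + w, C.add_mem hu hw, map_add _ u w⟩
  · rintro _ ⟨u, hu, rfl⟩
    exact ⟨-u, C.neg_mem hu, map_neg _ u⟩
  · rintro _ ⟨u, hu, rfl⟩
    exact ⟨_, hskew u hu, twistedSmap_skewShift heven u⟩
  · rw [Set.ncard_image_of_injective _ (twistedSmap_injective n), ← Nat.card_coe_set_eq,
      SetLike.coe_sort_coe, F4_natCard_eq_two_pow, hk]
  · rw [minWt_image _ two_ne_zero (hammingNorm_twistedSmap n), hd]
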